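/- For every natural number n ≥ 1, the total mutual-visibility number of the n-dimensional hypercube satisfies μ_t(Q_n) ≥ 2^(n−1) / n. -/

import Mathlib

/-- The `n`-dimensional hypercube: vertices are subsets of `{1,…,n}` (modeled as
`Finset (Fin n)`), with `A` and `B` adjacent iff their symmetric difference has size 1. -/
def hypercube (n : ℕ) : SimpleGraph (Finset (Fin n)) where
  Adj A B := (symmDiff A B).card = 1
  symm := ⟨fun A B h => by simpa only [symmDiff_comm] using h⟩
  loopless := ⟨fun A h => by simp [symmDiff_self] at h⟩

/-- `u` and `v` are `M`-visible in `G`: there is a shortest `u,v`-path containing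
no vertex of `M` as an internal vertex. -/
def IsVisiblePair {V : Type*} (G : SimpleGraph V) (M : Set V) (u v : V) : Prop :=
  ∃ p : G.Walk u v, p.IsPath ∧ p.length = G.dist u v ∧
    ∀ x ∈ p.support, x ∈ M → x = u ∨ x = v

/-- `M` is a mutual-visibility set in `G`. -/
def IsMutualVisibilitySet {V : Type*} (G : SimpleGraph V) (M : Set V) : Prop :=
  ∀ u ∈ M, ∀ v ∈ M, IsVisiblePair G M u v

/-- `M` is a total mutual-visibility set in `G`. -/
def IsTotalMutualVisibilitySet {V : Type*} (G : SimpleGraph V) (M : Set V) : Prop :=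
  ∀ u v : V, IsVisiblePair G M u v

/-- The mutual-visibility number `μ(Q_n)`. -/
noncomputable def mu (n : ℕ) : ℕ :=
  sSup {k | ∃ M : Set (Finset (Fin n)), IsMutualVisibilitySet (hypercube n) M ∧ M.ncard = k}

/-- The total mutual-visibility number `μ_t(Q_n)`. -/
noncomputable def muTotal (n : ℕ) : ℕ :=
  sSup {k | ∃ M : Set (Finset (Fin n)), IsTotalMutualVisibilitySet (hypercube n) M ∧ M.ncard = k}

/-- The chromatic mutual-visibility number `χ_μ(Q_n)`: the least number of colors in a
vertex-coloring of `Q_n` in which every color class is a mutual-visibility set. -/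
noncomputable def chiMu (n : ℕ) : ℕ :=
  sInf {k | ∃ c : Finset (Fin n) → Fin k, ∀ i : Fin k,
    IsMutualVisibilitySet (hypercube n) {A | c A = i}}

/-- The total chromatic mutual-visibility number `χ_μ^total(Q_n)`. -/
noncomputable def chiMuTotal (n : ℕ) : ℕ :=
  sInf {k | ∃ c : Finset (Fin n) → Fin k, ∀ i : Fin k,
    IsTotalMutualVisibilitySet (hypercube n) {A | c A = i}}

/-- A family `F` of `r`-element subsets of `[n]` contains an `(r,s,t)`-daisy if there are
`A ⊆ B` with `|A| = r - t` and `|B| = r + s - t` such that every `r`-set `T` with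
`A ⊆ T ⊆ B` belongs to `F`. -/
def ContainsDaisy (n r s t : ℕ) (F : Finset (Finset (Fin n))) : Prop :=
  ∃ A B : Finset (Fin n), A ⊆ B ∧ A.card = r - t ∧ B.card = r + s - t ∧
    ∀ T : Finset (Fin n), A ⊆ T → T ⊆ B → T.card = r → T ∈ F

/-- The Turán number `ex(n, D_r(s,t))`: the largest size of a family of `r`-element
subsets of `[n]` containing no `(r,s,t)`-daisy. -/
noncomputable def daisyTuran (n r s t : ℕ) : ℕ :=
  sSup {k | ∃ F : Finset (Finset (Fin n)), (∀ T ∈ F, T.card = r) ∧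
    ¬ ContainsDaisy n r s t F ∧ F.card = k}


/-! In `Q_n` the distance between `A` and `B` is `#(A ∆ B)`, and a set `M` containing no two
vertices at distance 2 is a total mutual-visibility set: on a geodesic from `u` to `v`, of any two
possible first steps at most one lands in `M`. Such sets are the fibres of `A ↦ ∑ i ∈ A, g i` for
an injection `g` of `[n]` into a vector space `G` over `ZMod 2`, since two sets `A ∆ B = {x, y}`
in one fibre would give `g x + g y = 0`, i.e. `g x = g y`. Taking `#G = 2 ^ (log₂ n + 1) ≤ 2n`,
some fibre has at least `2 ^ n / #G ≥ 2 ^ (n - 1) / n` elements. -/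

open Finset SimpleGraph
open scoped symmDiff

section SymmDiff

variable {α : Type*} [DecidableEq α]

lemma card_symmDiff_symmDiff_singleton_add_one {u v : Finset α} {e : α} (he : e ∈ u ∆ v) :
    #((u ∆ {e}) ∆ v) + 1 = #(u ∆ v) := by
  rw [symmDiff_right_comm, symmDiff_of_ge (singleton_subset_iff.2 he), sdiff_singleton_eq_erase,
    card_erase_add_one he]

lemma exists_mem_symmDiff_symmDiff_singleton_notMem {M : Set (Finset α)}
    (hM : ∀ A ∈ M, ∀ B ∈ M, #(A ∆ B) ≠ 2) {u v : Finset α} (huv : 2 ≤ #(u ∆ v)) :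
    ∃ e ∈ u ∆ v, u ∆ {e} ∉ M := by
  obtain ⟨e₁, he₁, e₂, he₂, hne⟩ := one_lt_card.1 huv
  by_contra! h
  apply hM _ (h e₁ he₁) _ (h e₂ he₂)
  rw [symmDiff_symmDiff_symmDiff_comm, symmDiff_self, bot_symmDiff,
    (disjoint_singleton.2 hne).symmDiff_eq_sup, sup_eq_union, ← insert_eq, card_pair hne]

end SymmDiff

section Hypercube

variable {n : ℕ}

lemma hypercube_adj_symmDiff_singleton (u : Finset (Fin n)) (e : Fin n) :
    (hypercube n).Adj u (u ∆ {e}) := by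
  change #(u ∆ (u ∆ {e})) = 1
  rw [symmDiff_symmDiff_cancel_left, card_singleton]

lemma card_symmDiff_le_length {u v : Finset (Fin n)} (p : (hypercube n).Walk u v) :
    #(u ∆ v) ≤ p.length := by
  induction p with
  | nil => simp
  | @cons a b c hab q ih =>
    have hab' : #(a ∆ b) = 1 := hab
    calc #(a ∆ c) ≤ #(a ∆ b ∪ b ∆ c) := card_le_card (symmDiff_triangle a b c)
      _ ≤ #(a ∆ b) + #(b ∆ c) := card_union_le _ _
      _ ≤ (Walk.cons hab q).length := by rw [Walk.length_cons]; omega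

lemma exists_walk_length_eq_card_symmDiff_avoiding {M : Set (Finset (Fin n))}
    (hM : ∀ A ∈ M, ∀ B ∈ M, #(A ∆ B) ≠ 2) (u v : Finset (Fin n)) :
    ∃ p : (hypercube n).Walk u v, p.length = #(u ∆ v) ∧
      ∀ x ∈ p.support, x ∈ M → x = u ∨ x = v := by
  induction hd : #(u ∆ v) generalizing u with
  | zero =>
    obtain rfl := symmDiff_eq_bot.1 (card_eq_zero.1 hd)
    exact ⟨Walk.nil, rfl, by simp⟩
  | succ d ih =>
    obtain ⟨e, he, hw⟩ : ∃ e ∈ u ∆ v, u ∆ {e} ∉ M ∨ u ∆ {e} = v := by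
      rcases Nat.lt_or_ge d 1 with hd1 | hd1
      · obtain ⟨e, he⟩ := card_eq_one.1 (show #(u ∆ v) = 1 by omega)
        refine ⟨e, by simp [he], Or.inr ?_⟩
        rw [← he, symmDiff_symmDiff_cancel_left]
      · obtain ⟨e, he, hw⟩ :=
          exists_mem_symmDiff_symmDiff_singleton_notMem hM (show 2 ≤ #(u ∆ v) by omega)
        exact ⟨e, he, Or.inl hw⟩
    obtain ⟨p, hp, hpM⟩ :=
      ih (u ∆ {e}) (by have := card_symmDiff_symmDiff_singleton_add_one he; omega)
    refine ⟨Walk.cons (hypercube_adj_symmDiff_singleton u e) p, by simp [hp], ?_⟩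
    intro x hx hxM
    rw [Walk.support_cons, List.mem_cons] at hx
    rcases hx with rfl | hx
    · exact Or.inl rfl
    · rcases hpM x hx hxM with rfl | rfl
      · exact hw.elim (absurd hxM) Or.inr
      · exact Or.inr rfl

lemma hypercube_dist (u v : Finset (Fin n)) : (hypercube n).dist u v = #(u ∆ v) := by
  obtain ⟨p, hp, -⟩ := exists_walk_length_eq_card_symmDiff_avoiding (M := ∅) (by simp) u v
  refine le_antisymm (hp ▸ dist_le p) ?_
  obtain ⟨q, hq⟩ := p.reachable.exists_walk_length_eq_dist
  exact hq ▸ card_symmDiff_le_length q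

lemma isTotalMutualVisibilitySet_hypercube_of_card_symmDiff_ne_two
    {M : Set (Finset (Fin n))} (hM : ∀ A ∈ M, ∀ B ∈ M, #(A ∆ B) ≠ 2) :
    IsTotalMutualVisibilitySet (hypercube n) M := by
  intro u v
  obtain ⟨p, hp, hpM⟩ := exists_walk_length_eq_card_symmDiff_avoiding hM u v
  have hdist : p.length = (hypercube n).dist u v := hp.trans (hypercube_dist u v).symm
  exact ⟨p, p.isPath_of_length_eq_dist hdist, hdist, hpM⟩

lemma IsTotalMutualVisibilitySet.ncard_le_muTotal {M : Set (Finset (Fin n))}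
    (hM : IsTotalMutualVisibilitySet (hypercube n) M) : M.ncard ≤ muTotal n :=
  le_csSup ⟨Nat.card (Finset (Fin n)), by rintro _ ⟨N, -, rfl⟩; exact N.ncard_le_card⟩
    ⟨M, hM, rfl⟩

end Hypercube

section SumFibers

variable {α G : Type*} [DecidableEq α] [AddCommGroup G] [Module (ZMod 2) G]

lemma sum_symmDiff_eq_add (g : α → G) (A B : Finset α) :
    ∑ i ∈ A ∆ B, g i = ∑ i ∈ A, g i + ∑ i ∈ B, g i := by
  rw [symmDiff_def, sup_eq_union, sum_union disjoint_sdiff_sdiff, ← ZModModule.sub_eq_add,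
    ← ZModModule.sub_eq_add, sum_sdiff_sub_sum_sdiff]

lemma card_symmDiff_ne_two_of_sum_eq {g : α → G} (hg : Function.Injective g) {A B : Finset α}
    (h : ∑ i ∈ A, g i = ∑ i ∈ B, g i) : #(A ∆ B) ≠ 2 := by
  intro hAB
  obtain ⟨x, y, hxy, hAB⟩ := card_eq_two.1 hAB
  have : g x + g y = 0 := by
    rw [← sum_pair hxy, ← hAB, sum_symmDiff_eq_add, h, ZModModule.add_self]
  exact hxy (hg (by rwa [← sub_eq_zero, ZModModule.sub_eq_add]))

end SumFibers

lemma exists_le_ncard_fiber {β G : Type*} [Fintype β] [Fintype G] [Nonempty G]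
    [DecidableEq G] (f : β → G) :
    ∃ c : G, (Fintype.card β : ℝ) / Fintype.card G ≤ {b | f b = c}.ncard := by
  obtain ⟨c, -, hc⟩ := exists_le_card_fiber_of_nsmul_le_card_of_maps_to
    (f := f) (fun _ _ => mem_univ _) univ_nonempty
    (b := (Fintype.card β : ℝ) / Fintype.card G) (by
      rw [card_univ, card_univ, nsmul_eq_mul, mul_div_cancel₀]
      exact_mod_cast Fintype.card_ne_zero)
  refine ⟨c, hc.trans_eq ?_⟩
  rw [← Set.ncard_coe_finset, coe_filter]
  simp

lemma two_pow_pred_div_le_two_pow_div_two_pow_log {n : ℕ} (hn : 1 ≤ n) :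
    (2 : ℝ) ^ (n - 1) / n ≤ 2 ^ n / 2 ^ (Nat.log 2 n + 1) := by
  obtain ⟨m, rfl⟩ := Nat.exists_eq_add_of_le' hn
  rw [Nat.add_sub_cancel, pow_succ, pow_succ, mul_div_mul_right _ _ two_ne_zero]
  gcongr
  exact_mod_cast Nat.pow_log_le_self 2 (Nat.succ_ne_zero m)

/-- For every `n ≥ 1`, `μ_t(Q_n) ≥ 2^(n−1) / n`. -/
theorem muTotal_hypercube_lower (n : ℕ) (hn : 1 ≤ n) :
    (2 : ℝ) ^ (n - 1) / n ≤ (muTotal n : ℝ) := by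
  set G := Fin (Nat.log 2 n + 1) → ZMod 2
  obtain ⟨g⟩ : Nonempty (Fin n ↪ G) := Function.Embedding.nonempty_of_card_le <| by
    simpa [G] using (Nat.lt_pow_succ_log_self one_lt_two n).le
  obtain ⟨c, hc⟩ := exists_le_ncard_fiber fun A : Finset (Fin n) => ∑ i ∈ A, g i
  have hM : IsTotalMutualVisibilitySet (hypercube n) {A | ∑ i ∈ A, g i = c} :=
    isTotalMutualVisibilitySet_hypercube_of_card_symmDiff_ne_two fun A hA B hB =>
      card_symmDiff_ne_two_of_sum_eq g.injective (hA.trans hB.symm)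
  calc (2 : ℝ) ^ (n - 1) / n ≤ 2 ^ n / 2 ^ (Nat.log 2 n + 1) :=
        two_pow_pred_div_le_two_pow_div_two_pow_log hn
    _ = Fintype.card (Finset (Fin n)) / Fintype.card G := by simp [G]
    _ ≤ {A : Finset (Fin n) | ∑ i ∈ A, g i = c}.ncard := hc
    _ ≤ muTotal n := by exact_mod_cast hM.ncard_le_muTotal
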